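/- arXiv:1902.04777 — 3 statements merged into one kernel-verified Lean document; each statement's English description precedes it below -/
import Mathlib

section
/- Let p, q : ℝⁿ → ℝ be measurable variable exponents with 1 < q⁻ ≤ q⁺ < ∞, 1 < p⁻ ≤ p⁺ < ∞ and q(x) ≤ p(x) for a.e. x, and let ϑ be a weight with ϑ^{-1/(p(·)-1)} locally integrable. If A ⊆ ℝⁿ satisfies C_{p,ϑ}(A) = 0, then C_{q,ϑ}(A) = 0. -/
/-! Compose a `C¹` test function `f` for the `(p,ϑ)`-capacity with a `C¹` cutoff `φ` that
vanishes on `(-∞, 1/2]` and equals `1` on `[1, ∞)`. Where `f < 1/2`, `φ ∘ f` vanishes together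
with its derivative; where `f ≥ 1/2`, `|φ ∘ f|^q ≤ 1 ≤ (2|f|)^p` and
`‖D(φ ∘ f)‖^q ≤ 1 + (L‖Df‖)^p` with `L = sup ‖φ'‖`. Hence the `(q,ϑ)`-energy of `φ ∘ f` is at most
a constant (depending on `ess sup p`) times the `(p,ϑ)`-energy of `f`. -/

open MeasureTheory Metric Set Filter ENNReal

noncomputable section

/-- The weighted variable exponent modular `ρ_{p,ϑ,A}(g) = ∫_A |g|^{p(x)} ϑ(x) dx`. -/
def rhoMod {n : ℕ} (p ϑ : EuclideanSpace ℝ (Fin n) → ℝ)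
    (A : Set (EuclideanSpace ℝ (Fin n))) (g : EuclideanSpace ℝ (Fin n) → ℝ) : ℝ≥0∞ :=
  ∫⁻ x in A, ENNReal.ofReal (|g x| ^ p x * ϑ x)

/-- Relative `(p(·),ϑ)`-capacity of a compact set `K` with respect to an open set `Ω`:
the infimum of `ρ_{p,ϑ,Ω}(‖Df‖)` over `C¹` functions with compact support contained in `Ω`
which are `≥ 1` on `K` (with `sInf ∅ = ∞`). -/
def relCapK {n : ℕ} (p ϑ : EuclideanSpace ℝ (Fin n) → ℝ)
    (K Ω : Set (EuclideanSpace ℝ (Fin n))) : ℝ≥0∞ :=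
  sInf ((fun f => rhoMod p ϑ Ω fun x => ‖fderiv ℝ f x‖) ''
    {f : EuclideanSpace ℝ (Fin n) → ℝ |
      ContDiff ℝ 1 f ∧ IsCompact (tsupport f) ∧ tsupport f ⊆ Ω ∧ ∀ x ∈ K, 1 ≤ f x})

/-- Relative capacity of an open subset `U ⊆ Ω`. -/
def relCapO {n : ℕ} (p ϑ : EuclideanSpace ℝ (Fin n) → ℝ)
    (U Ω : Set (EuclideanSpace ℝ (Fin n))) : ℝ≥0∞ :=
  ⨆ (K : Set (EuclideanSpace ℝ (Fin n))) (_ : IsCompact K ∧ K ⊆ U), relCapK p ϑ K Ω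

/-- Relative capacity of an arbitrary subset `A ⊆ Ω`. -/
def relCap {n : ℕ} (p ϑ : EuclideanSpace ℝ (Fin n) → ℝ)
    (A Ω : Set (EuclideanSpace ℝ (Fin n))) : ℝ≥0∞ :=
  ⨅ (U : Set (EuclideanSpace ℝ (Fin n))) (_ : IsOpen U ∧ A ⊆ U ∧ U ⊆ Ω), relCapO p ϑ U Ω

/-- The Sobolev `(p(·),ϑ)`-capacity of `A ⊆ ℝⁿ`. -/
def sobCap {n : ℕ} (p ϑ : EuclideanSpace ℝ (Fin n) → ℝ)
    (A : Set (EuclideanSpace ℝ (Fin n))) : ℝ≥0∞ :=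
  sInf ((fun f => ∫⁻ x, ENNReal.ofReal ((|f x| ^ p x + ‖fderiv ℝ f x‖ ^ p x) * ϑ x)) ''
    {f : EuclideanSpace ℝ (Fin n) → ℝ |
      ContDiff ℝ 1 f ∧ ∃ U, IsOpen U ∧ A ⊆ U ∧ ∀ x ∈ U, 1 ≤ f x})

/-- The weighted measure `μ_ϑ(A) = ∫_A ϑ(x) dx`. -/
def muW {n : ℕ} (ϑ : EuclideanSpace ℝ (Fin n) → ℝ)
    (A : Set (EuclideanSpace ℝ (Fin n))) : ℝ≥0∞ :=
  ∫⁻ x in A, ENNReal.ofReal (ϑ x)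

/-- `μ_ϑ` is doubling with constant `cd`. -/
def DoublingW {n : ℕ} (ϑ : EuclideanSpace ℝ (Fin n) → ℝ) (cd : ℝ) : Prop :=
  1 ≤ cd ∧ ∀ (x : EuclideanSpace ℝ (Fin n)) (r : ℝ), 0 < r →
    muW ϑ (ball x (2 * r)) ≤ ENNReal.ofReal cd * muW ϑ (ball x r)

/-- Poincaré hypothesis with constant `c` for the weight `ϑ`. -/
def PoincareHyp {n : ℕ} (ϑ : EuclideanSpace ℝ (Fin n) → ℝ) (c : ℝ) : Prop :=
  ∀ Ω : Set (EuclideanSpace ℝ (Fin n)), IsOpen Ω → Bornology.IsBounded Ω →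
    ∀ f : EuclideanSpace ℝ (Fin n) → ℝ, ContDiff ℝ 1 f → IsCompact (tsupport f) →
      tsupport f ⊆ Ω →
      ∫ x in Ω, |f x| * ϑ x ≤ c * diam Ω * ∫ x in Ω, ‖fderiv ℝ f x‖ * ϑ x

/-- Embedding hypothesis `L^{p(·)}_ϑ(Ω) ↪ L¹_ϑ(Ω)` with constants `c₁ Ω`. -/
def EmbeddingHyp {n : ℕ} (p ϑ : EuclideanSpace ℝ (Fin n) → ℝ)
    (c₁ : Set (EuclideanSpace ℝ (Fin n)) → ℝ) : Prop :=
  ∀ Ω : Set (EuclideanSpace ℝ (Fin n)), IsOpen Ω → Bornology.IsBounded Ω →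
    0 < c₁ Ω ∧ ∀ g : EuclideanSpace ℝ (Fin n) → ℝ, Measurable g → 1 ≤ rhoMod p ϑ Ω g →
      (∫⁻ x in Ω, ENNReal.ofReal (|g x| * ϑ x)) ≤ ENNReal.ofReal (c₁ Ω) * rhoMod p ϑ Ω g

/-- The Wiener sum `W^{sum}_{p,ϑ}(A,x₀)`. -/
def wienerSum {n : ℕ} (p ϑ : EuclideanSpace ℝ (Fin n) → ℝ)
    (A : Set (EuclideanSpace ℝ (Fin n))) (x₀ : EuclideanSpace ℝ (Fin n)) : ℝ≥0∞ :=
  ∑' i : ℕ,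
    (relCap p ϑ (A ∩ ball x₀ ((2 : ℝ) ^ (-(i : ℤ)))) (ball x₀ ((2 : ℝ) ^ (1 - (i : ℤ)))) /
        relCap p ϑ (ball x₀ ((2 : ℝ) ^ (-(i : ℤ)))) (ball x₀ ((2 : ℝ) ^ (1 - (i : ℤ))))) ^
      (1 / (p x₀ - 1))

/-- The Wiener type integral `W_{p,ϑ}(A,x₀)`. -/
def wienerInt {n : ℕ} (p ϑ : EuclideanSpace ℝ (Fin n) → ℝ)
    (A : Set (EuclideanSpace ℝ (Fin n))) (x₀ : EuclideanSpace ℝ (Fin n)) : ℝ≥0∞ :=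
  ∫⁻ r in Set.Ioo (0 : ℝ) 1,
    (relCap p ϑ (A ∩ ball x₀ r) (ball x₀ (2 * r)) /
        relCap p ϑ (ball x₀ r) (ball x₀ (2 * r))) ^ (1 / (p x₀ - 1)) / ENNReal.ofReal r

open scoped Topology

/-- `0 ≤ c` is needed because `essInf` of a real function unbounded below is the junk value `0`. -/
lemma ae_lt_of_lt_essInf_of_nonneg {α : Type*} [MeasurableSpace α] {μ : Measure α}
    {f : α → ℝ} {c : ℝ} (hc : 0 ≤ c) (h : c < essInf f μ) : ∀ᵐ x ∂μ, c < f x := by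
  refine ae_lt_of_lt_essInf h ?_
  by_contra hf
  rw [essInf, Real.liminf_of_not_isBoundedUnder hf] at h
  linarith

lemma Real.rpow_le_one_add_rpow {t q p : ℝ} (ht : 0 ≤ t) (hq : 0 ≤ q) (hqp : q ≤ p) :
    t ^ q ≤ 1 + t ^ p := by
  rcases le_total t 1 with ht1 | ht1
  · linarith [Real.rpow_le_one ht ht1 hq, Real.rpow_nonneg ht p]
  · linarith [Real.rpow_le_rpow_of_exponent_le ht1 hqp]

def cutoff (s : ℝ) : ℝ := Real.smoothTransition (2 * s - 1)

namespace cutoff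

lemma contDiff : ContDiff ℝ 1 cutoff :=
  Real.smoothTransition.contDiff.comp ((contDiff_const.mul contDiff_id).sub contDiff_const)

lemma nonneg (s : ℝ) : 0 ≤ cutoff s := Real.smoothTransition.nonneg _

lemma le_one (s : ℝ) : cutoff s ≤ 1 := Real.smoothTransition.le_one _

lemma eq_zero {s : ℝ} (hs : s ≤ 1 / 2) : cutoff s = 0 :=
  Real.smoothTransition.zero_of_nonpos (by linarith)

lemma eq_one {s : ℝ} (hs : 1 ≤ s) : cutoff s = 1 :=
  Real.smoothTransition.one_of_one_le (by linarith)

lemma hasCompactSupport_fderiv : HasCompactSupport (fderiv ℝ cutoff) := by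
  refine HasCompactSupport.intro (isCompact_Icc (a := 1 / 2) (b := 1)) fun t ht => ?_
  rw [mem_Icc, not_and_or, not_le, not_le] at ht
  rcases ht with ht | ht
  · have : cutoff =ᶠ[𝓝 t] fun _ => 0 := by
      filter_upwards [Iio_mem_nhds ht] with s hs using eq_zero hs.le
    rw [this.fderiv_eq, fderiv_const_apply]
  · have : cutoff =ᶠ[𝓝 t] fun _ => 1 := by
      filter_upwards [Ioi_mem_nhds ht] with s hs using eq_one hs.le
    rw [this.fderiv_eq, fderiv_const_apply]

lemma exists_norm_fderiv_le : ∃ L : ℝ, 1 ≤ L ∧ ∀ t, ‖fderiv ℝ cutoff t‖ ≤ L := by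
  obtain ⟨L, hL⟩ := (contDiff.continuous_fderiv one_ne_zero).bounded_above_of_compact_support
    hasCompactSupport_fderiv
  exact ⟨max L 1, le_max_right _ _, fun t => (hL t).trans (le_max_left _ _)⟩

end cutoff

lemma rpow_add_rpow_le_of_half_le {q p P L a b F G : ℝ} (hq : 0 ≤ q) (hqp : q ≤ p)
    (hpP : p ≤ P) (hL : 1 ≤ L) (ha : a ∈ Icc (0 : ℝ) 1) (hb : 0 ≤ b) (hbG : b ≤ L * G)
    (hG : 0 ≤ G) (hF : 1 / 2 ≤ F) :
    a ^ q + b ^ q ≤ (2 * 2 ^ P + L ^ P) * (F ^ p + G ^ p) := by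
  have hp : 0 ≤ p := hq.trans hqp
  have hF₀ : 0 ≤ F := by linarith
  have h_one_le : 1 ≤ 2 ^ P * F ^ p := calc
    (1 : ℝ) ≤ (2 * F) ^ p := Real.one_le_rpow (by linarith) hp
    _ = 2 ^ p * F ^ p := Real.mul_rpow zero_le_two hF₀
    _ ≤ 2 ^ P * F ^ p := by
      gcongr
      exact one_le_two
  have hb_le : b ^ p ≤ L ^ P * G ^ p := calc
    b ^ p ≤ (L * G) ^ p := Real.rpow_le_rpow hb hbG hp
    _ = L ^ p * G ^ p := Real.mul_rpow (by linarith) hG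
    _ ≤ L ^ P * G ^ p := by gcongr
  have h2P : 0 ≤ (2 : ℝ) ^ P := Real.rpow_nonneg zero_le_two P
  have hLP : 0 ≤ L ^ P := Real.rpow_nonneg (by linarith) P
  calc a ^ q + b ^ q ≤ 1 + (1 + b ^ p) :=
        add_le_add (Real.rpow_le_one ha.1 ha.2 hq) (Real.rpow_le_one_add_rpow hb hq hqp)
    _ ≤ 2 * (2 ^ P * F ^ p) + L ^ P * G ^ p := by linarith
    _ ≤ (2 * 2 ^ P + L ^ P) * (F ^ p + G ^ p) := by
      nlinarith [mul_nonneg h2P (Real.rpow_nonneg hG p), mul_nonneg hLP (Real.rpow_nonneg hF₀ p)]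

section cutoffComp

variable {E : Type*} [NormedAddCommGroup E] [NormedSpace ℝ E] {f : E → ℝ}

lemma fderiv_cutoff_comp_of_lt (hf : Continuous f) {x : E} (hx : f x < 1 / 2) :
    fderiv ℝ (cutoff ∘ f) x = 0 := by
  have : cutoff ∘ f =ᶠ[𝓝 x] fun _ => 0 := by
    filter_upwards [(isOpen_lt hf continuous_const).mem_nhds hx] with y hy
    exact cutoff.eq_zero (le_of_lt hy)
  rw [this.fderiv_eq, fderiv_const_apply]

lemma norm_fderiv_cutoff_comp_le (hf : Differentiable ℝ f) {L : ℝ}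
    (hL : ∀ t, ‖fderiv ℝ cutoff t‖ ≤ L) (x : E) :
    ‖fderiv ℝ (cutoff ∘ f) x‖ ≤ L * ‖fderiv ℝ f x‖ := by
  rw [fderiv_comp x ((cutoff.contDiff.differentiable one_ne_zero) _) (hf x)]
  exact (ContinuousLinearMap.opNorm_comp_le _ _).trans
    (mul_le_mul_of_nonneg_right (hL _) (norm_nonneg _))

lemma cutoff_comp_rpow_add_le (hf : ContDiff ℝ 1 f) {L : ℝ} (hL₁ : 1 ≤ L)
    (hL : ∀ t, ‖fderiv ℝ cutoff t‖ ≤ L) {q p P : ℝ} (hq : 0 < q) (hqp : q ≤ p) (hpP : p ≤ P)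
    (x : E) :
    |cutoff (f x)| ^ q + ‖fderiv ℝ (cutoff ∘ f) x‖ ^ q ≤
      (2 * 2 ^ P + L ^ P) * (|f x| ^ p + ‖fderiv ℝ f x‖ ^ p) := by
  rcases lt_or_ge (f x) (1 / 2) with hx | hx
  · rw [cutoff.eq_zero hx.le, fderiv_cutoff_comp_of_lt hf.continuous hx, abs_zero, norm_zero,
      Real.zero_rpow hq.ne', add_zero]
    have : 0 ≤ L ^ P := Real.rpow_nonneg (by linarith) P
    positivity
  · refine rpow_add_rpow_le_of_half_le hq.le hqp hpP hL₁ ?_ (norm_nonneg _)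
      (norm_fderiv_cutoff_comp_le (hf.differentiable one_ne_zero) hL x) (norm_nonneg _)
      (hx.trans (le_abs_self _))
    rw [abs_of_nonneg (cutoff.nonneg _)]
    exact ⟨cutoff.nonneg _, cutoff.le_one _⟩

end cutoffComp

lemma sobCap_le_mul_sobCap {n : ℕ} {p q ϑ : EuclideanSpace ℝ (Fin n) → ℝ} {P : ℝ}
    (hq : ∀ᵐ x, 0 < q x) (hqp : ∀ᵐ x, q x ≤ p x) (hpP : ∀ᵐ x, p x ≤ P) (hϑ : ∀ x, 0 ≤ ϑ x) :
    ∃ C : ℝ, ∀ A, sobCap q ϑ A ≤ ENNReal.ofReal C * sobCap p ϑ A := by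
  obtain ⟨L, hL₁, hL⟩ := cutoff.exists_norm_fderiv_le
  set C : ℝ := 2 * 2 ^ P + L ^ P
  have hC : 0 < C := by
    have := Real.rpow_pos_of_pos (zero_lt_one.trans_le hL₁) P
    positivity
  have hC₀ : ENNReal.ofReal C ≠ 0 := (ENNReal.ofReal_pos.mpr hC).ne'
  refine ⟨C, fun A => ?_⟩
  conv_rhs => rw [sobCap, sInf_image, ENNReal.mul_iInf_of_ne hC₀ ENNReal.ofReal_ne_top]
  refine le_iInf fun f => ?_
  rw [ENNReal.mul_iInf_of_ne hC₀ ENNReal.ofReal_ne_top]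
  refine le_iInf fun ⟨hf, U, hU, hAU, hfU⟩ => ?_
  have hpointwise : ∀ᵐ x, ENNReal.ofReal
      ((|cutoff (f x)| ^ q x + ‖fderiv ℝ (cutoff ∘ f) x‖ ^ q x) * ϑ x) ≤
        ENNReal.ofReal C * ENNReal.ofReal ((|f x| ^ p x + ‖fderiv ℝ f x‖ ^ p x) * ϑ x) := by
    filter_upwards [hq, hqp, hpP] with x hqx hqpx hpPx
    rw [← ENNReal.ofReal_mul hC.le, ← mul_assoc]
    exact ENNReal.ofReal_le_ofReal (mul_le_mul_of_nonneg_right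
      (cutoff_comp_rpow_add_le hf hL₁ hL hqx hqpx hpPx x) (hϑ x))
  calc sobCap q ϑ A
      ≤ ∫⁻ x, ENNReal.ofReal
          ((|cutoff (f x)| ^ q x + ‖fderiv ℝ (cutoff ∘ f) x‖ ^ q x) * ϑ x) :=
        sInf_le ⟨cutoff ∘ f, ⟨cutoff.contDiff.comp hf, U, hU, hAU,
          fun x hx => (cutoff.eq_one (hfU x hx)).ge⟩, rfl⟩
    _ ≤ ∫⁻ x, ENNReal.ofReal C * ENNReal.ofReal ((|f x| ^ p x + ‖fderiv ℝ f x‖ ^ p x) * ϑ x) :=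
        lintegral_mono_ae hpointwise
    _ = ENNReal.ofReal C * ∫⁻ x, ENNReal.ofReal ((|f x| ^ p x + ‖fderiv ℝ f x‖ ^ p x) * ϑ x) :=
        lintegral_const_mul' _ _ ENNReal.ofReal_ne_top

theorem stmt0_general (n : ℕ) (p ϑ : EuclideanSpace ℝ (Fin n) → ℝ)
    (hpb : Filter.IsBoundedUnder (· ≤ ·) (ae (volume : Measure (EuclideanSpace ℝ (Fin n)))) p)
    (hϑpos : ∀ x, 0 < ϑ x)
    (q : EuclideanSpace ℝ (Fin n) → ℝ)
    (hqm : 1 < essInf q (volume : Measure (EuclideanSpace ℝ (Fin n))))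
    (hqp : ∀ᵐ x ∂(volume : Measure (EuclideanSpace ℝ (Fin n))), q x ≤ p x)
    (A : Set (EuclideanSpace ℝ (Fin n))) (h : sobCap p ϑ A = 0) :
    sobCap q ϑ A = 0 := by
  obtain ⟨P, hpP⟩ := hpb
  have hq : ∀ᵐ x, 0 < q x := ae_lt_of_lt_essInf_of_nonneg le_rfl (zero_lt_one.trans hqm)
  obtain ⟨C, hC⟩ := sobCap_le_mul_sobCap hq hqp (eventually_map.mp hpP) fun x => (hϑpos x).le
  simpa [h] using hC A

/-- If the Sobolev `(p(·),ϑ)`-capacity of `A` is zero and `q ≤ p` a.e., then the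
Sobolev `(q(·),ϑ)`-capacity of `A` is zero. -/
theorem stmt0 (n : ℕ) (hn : 1 ≤ n) (p ϑ : EuclideanSpace ℝ (Fin n) → ℝ)
    (hp : Measurable p)
    (hpm : 1 < essInf p (volume : Measure (EuclideanSpace ℝ (Fin n))))
    (hpb : Filter.IsBoundedUnder (· ≤ ·) (ae (volume : Measure (EuclideanSpace ℝ (Fin n)))) p)
    (hϑpos : ∀ x, 0 < ϑ x)
    (hϑloc : LocallyIntegrable ϑ (volume : Measure (EuclideanSpace ℝ (Fin n))))
    (q : EuclideanSpace ℝ (Fin n) → ℝ) (hq : Measurable q)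
    (hqm : 1 < essInf q (volume : Measure (EuclideanSpace ℝ (Fin n))))
    (hqb : Filter.IsBoundedUnder (· ≤ ·) (ae (volume : Measure (EuclideanSpace ℝ (Fin n)))) q)
    (hqp : ∀ᵐ x ∂(volume : Measure (EuclideanSpace ℝ (Fin n))), q x ≤ p x)
    (hϑinv : LocallyIntegrable (fun x => ϑ x ^ (-(1 / (p x - 1)))) (volume : Measure (EuclideanSpace ℝ (Fin n))))
    (A : Set (EuclideanSpace ℝ (Fin n))) (h : sobCap p ϑ A = 0) :
    sobCap q ϑ A = 0 :=
  stmt0_general n p ϑ hpb hϑpos q hqm hqp A h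

end
end

section
/- Let Ω ⊆ ℝⁿ be open and K ⊆ Ω compact. Then cap*_{p,ϑ}(K,Ω) = cap_{p,ϑ}(K,Ω); that is, inf { sup { cap*_{p,ϑ}(L,Ω) : L ⊆ U compact } : U open, K ⊆ U ⊆ Ω } = cap*_{p,ϑ}(K,Ω), so the relative (p(·),ϑ)-capacity obtained by the two-step extension to arbitrary sets agrees on compact sets with the original compact-set definition. -/
/-! If `f` is admissible for `K`, then for every `c > 1` the function `c f` is admissible for every
compact subset of the open neighbourhood `{c f > 1} ⊆ Ω` of `K`, so the capacity of `K` in the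
extended sense is at most `ρ(c ‖Df‖) ≤ c^{p⁺} ρ(‖Df‖)`; letting `c → 1` gives `cap ≤ cap*`. The
reverse inequality holds because `K` itself is a compact subset of each of its neighbourhoods. -/

open MeasureTheory Metric Set Filter ENNReal

noncomputable section

open Topology

variable {n : ℕ} {p ϑ : EuclideanSpace ℝ (Fin n) → ℝ} {Ω : Set (EuclideanSpace ℝ (Fin n))}

lemma relCapK_le_relCapO {K U : Set (EuclideanSpace ℝ (Fin n))} (hK : IsCompact K)
    (hKU : K ⊆ U) : relCapK p ϑ K Ω ≤ relCapO p ϑ U Ω :=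
  le_iSup₂_of_le K ⟨hK, hKU⟩ le_rfl

lemma relCapK_le_relCap {K : Set (EuclideanSpace ℝ (Fin n))} (hK : IsCompact K) :
    relCapK p ϑ K Ω ≤ relCap p ϑ K Ω :=
  le_iInf₂ fun _ hU => relCapK_le_relCapO hK hU.2.1

lemma relCapO_le_rhoMod {U : Set (EuclideanSpace ℝ (Fin n))}
    {g : EuclideanSpace ℝ (Fin n) → ℝ} (hg : ContDiff ℝ 1 g) (hgc : HasCompactSupport g)
    (hgΩ : tsupport g ⊆ Ω) (hgU : ∀ x ∈ U, 1 ≤ g x) :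
    relCapO p ϑ U Ω ≤ rhoMod p ϑ Ω fun x => ‖fderiv ℝ g x‖ :=
  iSup₂_le fun _ hL => sInf_le ⟨g, ⟨hg, hgc, hgΩ, fun x hx => hgU x (hL.2 hx)⟩, rfl⟩

lemma rhoMod_const_mul_le {A : Set (EuclideanSpace ℝ (Fin n))}
    {g : EuclideanSpace ℝ (Fin n) → ℝ} {c M : ℝ} (hc : 1 ≤ c)
    (hpM : ∀ᵐ x ∂volume.restrict A, p x ≤ M) :
    rhoMod p ϑ A (fun x => c * g x) ≤ ENNReal.ofReal (c ^ M) * rhoMod p ϑ A g := by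
  have hc0 : 0 ≤ c := zero_le_one.trans hc
  rw [rhoMod, rhoMod, ← lintegral_const_mul' _ _ ofReal_ne_top]
  refine lintegral_mono_ae (hpM.mono fun x hx => ?_)
  rw [abs_mul, abs_of_nonneg hc0, Real.mul_rpow hc0 (abs_nonneg _), mul_assoc,
    ENNReal.ofReal_mul (Real.rpow_nonneg hc0 _)]
  gcongr

lemma norm_fderiv_const_mul {E : Type*} [NormedAddCommGroup E] [NormedSpace ℝ E] {f : E → ℝ}
    {x : E} (hf : DifferentiableAt ℝ f x) {c : ℝ} (hc : 0 ≤ c) :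
    ‖fderiv ℝ (fun y => c * f y) x‖ = c * ‖fderiv ℝ f x‖ := by
  rw [fderiv_const_mul hf, norm_smul, Real.norm_of_nonneg hc]

lemma relCap_le_ofReal_rpow_mul_rhoMod {K : Set (EuclideanSpace ℝ (Fin n))}
    {f : EuclideanSpace ℝ (Fin n) → ℝ} {c M : ℝ} (hc : 1 < c) (hpM : ∀ᵐ x, p x ≤ M)
    (hf : ContDiff ℝ 1 f) (hfc : HasCompactSupport f) (hfΩ : tsupport f ⊆ Ω)
    (hfK : ∀ x ∈ K, 1 ≤ f x) :
    relCap p ϑ K Ω ≤ ENNReal.ofReal (c ^ M) * rhoMod p ϑ Ω fun x => ‖fderiv ℝ f x‖ := by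
  set U := {x | 1 < c * f x}
  have hU : IsOpen U := isOpen_lt continuous_const (continuous_const.mul hf.continuous)
  have hKU : K ⊆ U := fun x hx => one_lt_mul_of_lt_of_le hc (hfK x hx)
  have hUΩ : U ⊆ Ω := fun x hx =>
    hfΩ (subset_tsupport f fun hfx => by simp only [U, mem_ofPred_eq, hfx, mul_zero] at hx; linarith)
  calc relCap p ϑ K Ω
      ≤ relCapO p ϑ U Ω := iInf₂_le U ⟨hU, hKU, hUΩ⟩
    _ ≤ rhoMod p ϑ Ω fun x => ‖fderiv ℝ (fun y => c * f y) x‖ :=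
        relCapO_le_rhoMod (contDiff_const.mul hf) hfc.mul_left
          (tsupport_mul_subset_right.trans hfΩ) fun _ hx => hx.le
    _ = rhoMod p ϑ Ω fun x => c * ‖fderiv ℝ f x‖ := by
        simp only [norm_fderiv_const_mul (hf.differentiable one_ne_zero _) (by linarith : 0 ≤ c)]
    _ ≤ ENNReal.ofReal (c ^ M) * rhoMod p ϑ Ω fun x => ‖fderiv ℝ f x‖ :=
        rhoMod_const_mul_le hc.le (ae_restrict_of_ae hpM)

lemma relCap_le_relCapK {K : Set (EuclideanSpace ℝ (Fin n))} {M : ℝ} (hpM : ∀ᵐ x, p x ≤ M) :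
    relCap p ϑ K Ω ≤ relCapK p ϑ K Ω := by
  refine le_sInf ?_
  rintro _ ⟨f, ⟨hf, hfc, hfΩ, hfK⟩, rfl⟩
  have hpow : Tendsto (fun c : ℝ => ENNReal.ofReal (c ^ M)) (𝓝[>] 1) (𝓝 1) := by
    have := ENNReal.tendsto_ofReal (Real.continuousAt_rpow_const 1 M (Or.inl one_ne_zero)).tendsto
    simpa using this.mono_left nhdsWithin_le_nhds
  have hlim := ENNReal.Tendsto.mul_const hpow
    (Or.inl one_ne_zero) (b := rhoMod p ϑ Ω fun x => ‖fderiv ℝ f x‖)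
  rw [one_mul] at hlim
  exact ge_of_tendsto hlim (eventually_nhdsWithin_of_forall fun c hc =>
    relCap_le_ofReal_rpow_mul_rhoMod hc hpM hf hfc hfΩ hfK)

theorem stmt2_general (n : ℕ) (p ϑ : EuclideanSpace ℝ (Fin n) → ℝ)
    (hpb : Filter.IsBoundedUnder (· ≤ ·) (ae (volume : Measure (EuclideanSpace ℝ (Fin n)))) p)
    (Ω K : Set (EuclideanSpace ℝ (Fin n))) (hK : IsCompact K) :
    relCap p ϑ K Ω = relCapK p ϑ K Ω := by
  obtain ⟨M, hpM⟩ := hpb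
  exact le_antisymm (relCap_le_relCapK hpM) (relCapK_le_relCap hK)

/-- On compact sets, the relative capacity obtained by the two-step extension to
arbitrary sets agrees with the original compact-set definition:
`cap_{p,ϑ}(K,Ω) = cap*_{p,ϑ}(K,Ω)`. -/
theorem stmt2 (n : ℕ) (hn : 1 ≤ n) (p ϑ : EuclideanSpace ℝ (Fin n) → ℝ)
    (hp : Measurable p)
    (hpm : 1 < essInf p (volume : Measure (EuclideanSpace ℝ (Fin n))))
    (hpb : Filter.IsBoundedUnder (· ≤ ·) (ae (volume : Measure (EuclideanSpace ℝ (Fin n)))) p)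
    (hϑpos : ∀ x, 0 < ϑ x)
    (hϑloc : LocallyIntegrable ϑ (volume : Measure (EuclideanSpace ℝ (Fin n))))
    (Ω K : Set (EuclideanSpace ℝ (Fin n))) (hΩ : IsOpen Ω) (hK : IsCompact K) (hKΩ : K ⊆ Ω) :
    relCap p ϑ K Ω = relCapK p ϑ K Ω :=
  stmt2_general n p ϑ hpb Ω K hK

end
end

section
/- Let Ω ⊆ ℝⁿ be open and let (Kₘ)_{m∈ℕ} be a decreasing sequence of compact subsets of Ω (K_{m+1} ⊆ Kₘ for all m). Then lim_{m→∞} cap_{p,ϑ}(Kₘ, Ω) = cap_{p,ϑ}(⋂_{m=1}^∞ Kₘ, Ω). -/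
open MeasureTheory Metric Set Filter ENNReal

noncomputable section

/-- For a decreasing sequence of compact subsets of `Ω`, the relative capacities
converge to the relative capacity of the intersection. -/
theorem stmt4 (n : ℕ) (hn : 1 ≤ n) (p ϑ : EuclideanSpace ℝ (Fin n) → ℝ)
    (hp : Measurable p)
    (hpm : 1 < essInf p (volume : Measure (EuclideanSpace ℝ (Fin n))))
    (hpb : Filter.IsBoundedUnder (· ≤ ·) (ae (volume : Measure (EuclideanSpace ℝ (Fin n)))) p)
    (hϑpos : ∀ x, 0 < ϑ x)
    (hϑloc : LocallyIntegrable ϑ (volume : Measure (EuclideanSpace ℝ (Fin n))))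
    (Ω : Set (EuclideanSpace ℝ (Fin n))) (hΩ : IsOpen Ω) (K : ℕ → Set (EuclideanSpace ℝ (Fin n)))
    (hKc : ∀ m, IsCompact (K m)) (hKΩ : ∀ m, K m ⊆ Ω)
    (hdec : ∀ m, K (m + 1) ⊆ K m) :
    Filter.Tendsto (fun m => relCap p ϑ (K m) Ω) Filter.atTop
      (nhds (relCap p ϑ (⋂ m, K m) Ω)) := by
  have hK : Antitone K := antitone_nat_of_succ_le hdec
  have hmono : ∀ {A B : Set (EuclideanSpace ℝ (Fin n))}, A ⊆ B →
      relCap p ϑ A Ω ≤ relCap p ϑ B Ω := by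
    intro A B hAB
    exact le_iInf₂ fun U hU => iInf₂_le U ⟨hU.1, hAB.trans hU.2.1, hU.2.2⟩
  have hanti : Antitone fun m => relCap p ϑ (K m) Ω := fun i j hij => hmono (hK hij)
  have key : (⨅ m, relCap p ϑ (K m) Ω) = relCap p ϑ (⋂ m, K m) Ω := by
    apply le_antisymm
    · refine le_iInf₂ fun U hU => ?_
      obtain ⟨hUo, hsub, hUΩ⟩ := hU
      obtain ⟨m, hm⟩ : ∃ m, K m ⊆ U := by
        have hclosed : ∀ i, IsClosed (K i \ U) := fun i => (hKc i).isClosed.sdiff hUo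
        have hempty : (K 0 ∩ ⋂ i, (K i \ U)) = ∅ := by
          apply Set.eq_empty_of_subset_empty
          intro x hx
          simp only [Set.mem_inter_iff, Set.mem_iInter, Set.mem_diff] at hx
          exact (hx.2 0).2 (hsub (Set.mem_iInter.mpr fun i => (hx.2 i).1))
        have hanti' : Antitone fun i => K i \ U :=
          fun i j h => Set.diff_subset_diff_left (hK h)
        obtain ⟨i, hi⟩ := (hKc 0).elim_directed_family_closed _ hclosed hempty
          hanti'.directed_ge
        refine ⟨i, Set.diff_eq_empty.mp (Set.eq_empty_of_subset_empty fun x hx => ?_)⟩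
        have hsub0 : K i \ U ⊆ K 0 := (Set.diff_subset).trans (hK (Nat.zero_le i))
        exact hi ▸ ⟨hsub0 hx, hx⟩
      exact (iInf_le _ m).trans (iInf₂_le U ⟨hUo, hm, hUΩ⟩)
    · exact le_iInf fun m => hmono (Set.iInter_subset K m)
  rw [← key]
  exact tendsto_atTop_iInf hanti

end
end
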